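/- Let G: Ω × Ω → ℝ be a symmetric positive-semidefinite integrable kernel with |G(x,y)| ≤ C(−Γ(|x−y|) + 1) for some constant C, where Γ is the fundamental solution of the Laplacian (n ≥ 3). Then for all measurable E, F ⊆ Ω with |E| = |F|, NL(F) − NL(E) ≤ 2C(‖Γ * χ_F‖_{L∞(E △ F)} + |F|) · |E △ F|. -/

import Mathlib

/-!
Write `u = χ_F - χ_E`. Bilinearity and the symmetry of `G` give
`NL(F) - NL(E) = 2 ⟨G u, χ_F⟩ - ⟨G u, u⟩`, and the second term is nonnegative because `G` is
positive semidefinite. In the first term `u` is supported on `E △ F` with `|u| ≤ 1`, and for each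
`x` there `|∫_F G(x, y) dy| ≤ C (‖Γ * χ_F‖_{L∞(E △ F)} + |F|)` by integrating the pointwise bound
on `G`, which is possible because `|Γ(r)| ∼ r^{2-n}` is locally integrable in `ℝⁿ`.
-/

open MeasureTheory Metric
open scoped symmDiff

noncomputable def omegaN (n : ℕ) : ℝ :=
  (volume (ball (0 : EuclideanSpace ℝ (Fin n)) 1)).toReal

noncomputable def fundSol (n : ℕ) (t : ℝ) : ℝ :=
  t ^ ((2 : ℝ) - n) / (n * ((2 : ℝ) - n) * omegaN n)

noncomputable def NL {n : ℕ} (Ω : Set (EuclideanSpace ℝ (Fin n)))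
    (G : EuclideanSpace ℝ (Fin n) → EuclideanSpace ℝ (Fin n) → ℝ)
    (E : Set (EuclideanSpace ℝ (Fin n))) : ℝ :=
  ∫ x in Ω, ∫ y in Ω, G x y * E.indicator 1 x * E.indicator 1 y

theorem abs_indicator_one_le {β : Type*} (s : Set β) (x : β) :
    |s.indicator (1 : β → ℝ) x| ≤ 1 := by
  by_cases hx : x ∈ s <;> simp [hx]

theorem abs_indicator_one_sub_indicator_one_le {β : Type*} (s t : Set β) (x : β) :
    |s.indicator (1 : β → ℝ) x - t.indicator 1 x| ≤ (s ∆ t).indicator 1 x := by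
  rw [← Set.abs_indicator_symmDiff]
  exact (abs_of_nonneg (Set.indicator_nonneg (fun _ _ => zero_le_one) x)).le

section KernelForm

variable {α : Type*} [MeasurableSpace α]

-- `NL Ω G E` is `kernelForm (volume.restrict Ω) G χ_E χ_E` by definition.
noncomputable def kernelForm (μ : Measure α) (G : α → α → ℝ) (f g : α → ℝ) : ℝ :=
  ∫ x, ∫ y, G x y * f x * g y ∂μ ∂μ

variable {μ : Measure α} {G : α → α → ℝ}

theorem integrable_kernel_mul_mul (hG : Integrable (Function.uncurry G) (μ.prod μ))
    {f g : α → ℝ} {a b : ℝ} (hf : AEStronglyMeasurable f μ) (hg : AEStronglyMeasurable g μ)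
    (hfa : ∀ x, |f x| ≤ a) (hgb : ∀ y, |g y| ≤ b) :
    Integrable (fun p : α × α => G p.1 p.2 * f p.1 * g p.2) (μ.prod μ) := by
  have hfg : AEStronglyMeasurable (fun p : α × α => f p.1 * g p.2) (μ.prod μ) :=
    hf.comp_fst.mul hg.comp_snd
  refine (hG.mul_bdd (c := a * b) hfg (ae_of_all _ fun p => ?_)).congr (ae_of_all _ fun p => ?_)
  · rw [norm_mul, Real.norm_eq_abs, Real.norm_eq_abs]
    exact mul_le_mul (hfa _) (hgb _) (abs_nonneg _) ((abs_nonneg _).trans (hfa p.1))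
  · simp only [Function.uncurry]
    ring

theorem abs_kernelForm_le {u g : α → ℝ} {S : Set α} (hS : MeasurableSet S) (hSμ : μ S ≠ ⊤)
    {K : ℝ} (hu : ∀ x, |u x| ≤ S.indicator 1 x) (hK : ∀ x ∈ S, |∫ y, G x y * g y ∂μ| ≤ K) :
    |kernelForm μ G u g| ≤ K * μ.real S := by
  have hpointwise : ∀ x, ‖∫ y, G x y * u x * g y ∂μ‖ ≤ S.indicator (fun _ => K) x := by
    intro x
    have hpull : ∫ y, G x y * u x * g y ∂μ = u x * ∫ y, G x y * g y ∂μ := by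
      rw [← integral_const_mul]
      congr 1 with y
      ring
    rw [hpull, Real.norm_eq_abs, abs_mul]
    by_cases hx : x ∈ S
    · have hux : |u x| ≤ 1 := by simpa [hx] using hu x
      rw [Set.indicator_of_mem hx]
      simpa using mul_le_mul hux (hK x hx) (abs_nonneg _) zero_le_one
    · have hux : u x = 0 := abs_nonpos_iff.mp (by simpa [hx] using hu x)
      simp [hx, hux]
  have hint : Integrable (S.indicator fun _ => K) μ :=
    (integrable_indicator_iff hS).2 (integrableOn_const hSμ)
  calc |kernelForm μ G u g| ≤ ∫ x, S.indicator (fun _ => K) x ∂μ :=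
        norm_integral_le_of_norm_le hint (ae_of_all _ hpointwise)
    _ = K * μ.real S := by rw [integral_indicator_const K hS, smul_eq_mul, mul_comm]

variable [SFinite μ]

theorem kernelForm_eq_integral_prod {f g : α → ℝ}
    (hfg : Integrable (fun p : α × α => G p.1 p.2 * f p.1 * g p.2) (μ.prod μ)) :
    kernelForm μ G f g = ∫ p, G p.1 p.2 * f p.1 * g p.2 ∂μ.prod μ :=
  integral_integral (f := fun x y => G x y * f x * g y) hfg

theorem kernelForm_comm (hsymm : ∀ x y, G x y = G y x) {f g : α → ℝ}
    (hfg : Integrable (fun p : α × α => G p.1 p.2 * f p.1 * g p.2) (μ.prod μ)) :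
    kernelForm μ G f g = kernelForm μ G g f := by
  rw [kernelForm, integral_integral_swap hfg]
  congr 1 with x
  congr 1 with y
  rw [hsymm]
  ring

theorem kernelForm_self_sub_self (hG : Integrable (Function.uncurry G) (μ.prod μ))
    (hsymm : ∀ x y, G x y = G y x) {f g : α → ℝ} {a b : ℝ}
    (hf : AEStronglyMeasurable f μ) (hg : AEStronglyMeasurable g μ)
    (hfa : ∀ x, |f x| ≤ a) (hgb : ∀ y, |g y| ≤ b) :
    kernelForm μ G f f - kernelForm μ G g g =
      2 * kernelForm μ G (f - g) f - kernelForm μ G (f - g) (f - g) := by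
  have hu : ∀ x, |(f - g) x| ≤ a + b := fun x => (abs_sub _ _).trans (add_le_add (hfa x) (hgb x))
  have huf := integrable_kernel_mul_mul hG (hf.sub hg) hf hu hfa
  have hfu := integrable_kernel_mul_mul hG hf (hf.sub hg) hfa hu
  have huu := integrable_kernel_mul_mul hG (hf.sub hg) (hf.sub hg) hu hu
  have hff := integrable_kernel_mul_mul hG hf hf hfa hfa
  have hgg := integrable_kernel_mul_mul hG hg hg hgb hgb
  rw [two_mul]
  nth_rewrite 2 [kernelForm_comm hsymm huf]
  rw [kernelForm_eq_integral_prod huf, kernelForm_eq_integral_prod hfu,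
    kernelForm_eq_integral_prod huu, kernelForm_eq_integral_prod hff,
    kernelForm_eq_integral_prod hgg, ← integral_sub hff hgg, ← integral_add huf hfu,
    ← integral_sub (huf.add hfu : Integrable (fun p => _ + _) _) huu]
  congr 1 with p
  simp only [Pi.sub_apply]
  ring

theorem kernelForm_indicator_sub_le (hG : Integrable (Function.uncurry G) (μ.prod μ))
    (hsymm : ∀ x y, G x y = G y x)
    (hpos : ∀ f : α → ℝ, Measurable f → (∃ C₀ : ℝ, ∀ x, |f x| ≤ C₀) → 0 ≤ kernelForm μ G f f)
    {E F : Set α} (hE : MeasurableSet E) (hF : MeasurableSet F) (hEF : μ (E ∆ F) ≠ ⊤) {K : ℝ}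
    (hK : ∀ x ∈ E ∆ F, |∫ y in F, G x y ∂μ| ≤ K) :
    kernelForm μ G (F.indicator 1) (F.indicator 1) - kernelForm μ G (E.indicator 1) (E.indicator 1)
      ≤ 2 * K * μ.real (E ∆ F) := by
  have hχE : Measurable (E.indicator (1 : α → ℝ)) := measurable_one.indicator hE
  have hχF : Measurable (F.indicator (1 : α → ℝ)) := measurable_one.indicator hF
  have hu : ∀ x, |(F.indicator 1 - E.indicator 1 : α → ℝ) x| ≤ (E ∆ F).indicator 1 x := by
    rw [symmDiff_comm]
    exact abs_indicator_one_sub_indicator_one_le F E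
  have hquadratic := hpos _ (hχF.sub hχE)
    ⟨1, fun x => (hu x).trans ((le_abs_self _).trans (abs_indicator_one_le _ x))⟩
  have hinner : ∀ x, ∫ y, G x y * F.indicator 1 y ∂μ = ∫ y in F, G x y ∂μ := by
    intro x
    rw [← integral_indicator hF]
    congr 1 with y
    by_cases hy : y ∈ F <;> simp [hy]
  have hlinear := abs_kernelForm_le (hE.symmDiff hF) hEF hu fun x hx => (hinner x).symm ▸ hK x hx
  rw [kernelForm_self_sub_self hG hsymm hχF.aestronglyMeasurable hχE.aestronglyMeasurable
    (abs_indicator_one_le F) (abs_indicator_one_le E)]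
  linarith [le_abs_self (kernelForm μ G (F.indicator 1 - E.indicator 1) (F.indicator 1))]

end KernelForm

section FundamentalSolution

variable {n : ℕ}

theorem locallyIntegrable_fundSol_norm (hn : 1 ≤ n) :
    LocallyIntegrable (fun z : EuclideanSpace ℝ (Fin n) => fundSol n ‖z‖) volume := by
  have hmeas : Measurable fun z : EuclideanSpace ℝ (Fin n) => fundSol n ‖z‖ := by
    unfold fundSol
    fun_prop
  refine locallyIntegrable_of_norm_le_rpow (C := |(n * ((2 : ℝ) - n) * omegaN n)|⁻¹)
    (α := n - 2) (by simpa using hn) (by simp) (ae_of_all _ fun z => ?_) hmeas.aestronglyMeasurable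
  rw [fundSol, Real.norm_eq_abs, abs_div, abs_of_nonneg (Real.rpow_nonneg (norm_nonneg z) _),
    neg_sub, div_eq_inv_mul]

theorem integrableOn_fundSol_norm_sub (hn : 1 ≤ n) (x : EuclideanSpace ℝ (Fin n))
    {F : Set (EuclideanSpace ℝ (Fin n))} (hF : Bornology.IsBounded F) :
    IntegrableOn (fun y => fundSol n ‖x - y‖) F volume := by
  obtain ⟨r, hr⟩ := hF.subset_closedBall x
  have hball :=
    (locallyIntegrable_fundSol_norm hn).integrableOn_isCompact (isCompact_closedBall 0 r)
  rw [← (Measure.measurePreserving_sub_left volume x).integrableOn_comp_preimage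
    (MeasurableEquiv.subLeft x).measurableEmbedding] at hball
  refine hball.mono_set (hr.trans fun y hy => ?_)
  simpa [dist_eq_norm, norm_sub_rev] using hy

theorem abs_setIntegral_le_of_abs_le_fundSol (hn : 1 ≤ n)
    {F : Set (EuclideanSpace ℝ (Fin n))} (hF : MeasurableSet F) (hFb : Bornology.IsBounded F)
    {k : EuclideanSpace ℝ (Fin n) → ℝ} {x : EuclideanSpace ℝ (Fin n)} {C M : ℝ} (hC : 0 ≤ C)
    (hk : ∀ y ∈ F, |k y| ≤ C * (-(fundSol n ‖x - y‖) + 1))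
    (hM : |∫ y in F, fundSol n ‖x - y‖| ≤ M) :
    |∫ y in F, k y| ≤ C * (M + volume.real F) := by
  by_cases hkF : IntegrableOn k F
  · have hΓ := integrableOn_fundSol_norm_sub hn x hFb
    have hone : IntegrableOn (fun _ => (1 : ℝ)) F := integrableOn_const hFb.measure_lt_top.ne
    calc |∫ y in F, k y| ≤ ∫ y in F, |k y| := abs_integral_le_integral_abs
      _ ≤ ∫ y in F, C * (-(fundSol n ‖x - y‖) + 1) :=
          setIntegral_mono_on hkF.abs ((hΓ.neg.add hone).const_mul C) hF hk
      _ = C * (-(∫ y in F, fundSol n ‖x - y‖) + volume.real F) := by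
          rw [integral_const_mul, integral_add (f := fun y => -fundSol n ‖x - y‖) hΓ.neg hone,
            integral_neg, setIntegral_const, smul_eq_mul, mul_one]
      _ ≤ C * (M + volume.real F) := by
          gcongr
          exact (neg_le_abs _).trans hM
  · rw [integral_undef hkF, abs_zero]
    exact mul_nonneg hC (add_nonneg ((abs_nonneg _).trans hM) measureReal_nonneg)

end FundamentalSolution

theorem NL_lipschitz_estimate_general {n : ℕ} (hn : 3 ≤ n)
    (Ω : Set (EuclideanSpace ℝ (Fin n)))
    (hΩb : Bornology.IsBounded Ω)
    (G : EuclideanSpace ℝ (Fin n) → EuclideanSpace ℝ (Fin n) → ℝ)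
    (hGsym : ∀ x y, G x y = G y x)
    (hGint : IntegrableOn (Function.uncurry G) (Ω ×ˢ Ω) (volume.prod volume))
    (hGpos : ∀ f : EuclideanSpace ℝ (Fin n) → ℝ, Measurable f →
      (∃ C₀ : ℝ, ∀ x, |f x| ≤ C₀) →
      0 ≤ ∫ x in Ω, ∫ y in Ω, G x y * f x * f y)
    (C : ℝ) (hC : 0 < C)
    (hGbound : ∀ x ∈ Ω, ∀ y ∈ Ω, |G x y| ≤ C * (-(fundSol n ‖x - y‖) + 1))
    (E F : Set (EuclideanSpace ℝ (Fin n)))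
    (hE : MeasurableSet E) (hF : MeasurableSet F)
    (hEΩ : E ⊆ Ω) (hFΩ : F ⊆ Ω)
    (M : ℝ) (hM : ∀ x ∈ E ∆ F, |∫ y in F, fundSol n ‖x - y‖| ≤ M) :
    NL Ω G F - NL Ω G E ≤
      2 * C * (M + (volume F).toReal) * (volume (E ∆ F)).toReal := by
  have hEFΩ : E ∆ F ⊆ Ω := Set.symmDiff_subset_union.trans (Set.union_subset hEΩ hFΩ)
  have : IsFiniteMeasure (volume.restrict Ω) := isFiniteMeasure_restrict.2 hΩb.measure_lt_top.ne
  have key := kernelForm_indicator_sub_le (μ := volume.restrict Ω) (by rwa [Measure.prod_restrict])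
    hGsym hGpos hE hF (measure_ne_top _ _) (K := C * (M + volume.real F)) fun x hx => ?_
  · rw [measureReal_restrict_apply (hE.symmDiff hF), Set.inter_eq_left.2 hEFΩ] at key
    calc NL Ω G F - NL Ω G E ≤ 2 * (C * (M + volume.real F)) * volume.real (E ∆ F) := key
      _ = _ := by rw [measureReal_def, measureReal_def]; ring
  · rw [Measure.restrict_restrict hF, Set.inter_eq_left.2 hFΩ]
    exact abs_setIntegral_le_of_abs_le_fundSol (by omega) hF (hΩb.subset hFΩ) hC.le
      (fun y hy => hGbound x (hEFΩ hx) y (hFΩ hy)) (hM x hx)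

/-- Lipschitz estimate for the nonlocal term: if `|G(x,y)| ≤ C(−Γ(|x−y|)+1)`, then for sets of
equal volume, `NL(F) − NL(E) ≤ 2C(‖Γ * χ_F‖_{L∞(E △ F)} + |F|)|E △ F|`, where `M` is any
pointwise bound for `|Γ * χ_F|` on `E △ F`. -/
theorem NL_lipschitz_estimate {n : ℕ} (hn : 3 ≤ n)
    (Ω : Set (EuclideanSpace ℝ (Fin n)))
    (hΩ : MeasurableSet Ω) (hΩb : Bornology.IsBounded Ω)
    (G : EuclideanSpace ℝ (Fin n) → EuclideanSpace ℝ (Fin n) → ℝ)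
    (hGmeas : Measurable (Function.uncurry G))
    (hGsym : ∀ x y, G x y = G y x)
    (hGint : IntegrableOn (Function.uncurry G) (Ω ×ˢ Ω) (volume.prod volume))
    (hGpos : ∀ f : EuclideanSpace ℝ (Fin n) → ℝ, Measurable f →
      (∃ C₀ : ℝ, ∀ x, |f x| ≤ C₀) →
      0 ≤ ∫ x in Ω, ∫ y in Ω, G x y * f x * f y)
    (C : ℝ) (hC : 0 < C)
    (hGbound : ∀ x ∈ Ω, ∀ y ∈ Ω, |G x y| ≤ C * (-(fundSol n ‖x - y‖) + 1))
    (E F : Set (EuclideanSpace ℝ (Fin n)))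
    (hE : MeasurableSet E) (hF : MeasurableSet F)
    (hEΩ : E ⊆ Ω) (hFΩ : F ⊆ Ω)
    (hvol : volume E = volume F)
    (M : ℝ) (hM : ∀ x ∈ E ∆ F, |∫ y in F, fundSol n ‖x - y‖| ≤ M) :
    NL Ω G F - NL Ω G E ≤
      2 * C * (M + (volume F).toReal) * (volume (E ∆ F)).toReal :=
  NL_lipschitz_estimate_general hn Ω hΩb G hGsym hGint hGpos C hC hGbound E F hE hF hEΩ hFΩ M hM
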